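/- If exp(τA) is written in partitioned scaled form exp(τA) = [[T₁Γ⁻(τ), T₂Γ⁻(τ₁−τ)],[T₃Γ⁻(τ), T₄Γ⁻(τ₁−τ)]] * [[T₁, T₂Γ⁻(τ₁)],[T₃, T₄Γ⁻(τ₁)]]⁻¹ where A = T diag(−λ, λ) T⁻¹ with T = fromBlocks T₁ T₂ T₃ T₄ invertible and the scaled matrix [[T₁, T₂Γ⁻(τ₁)],[T₃, T₄Γ⁻(τ₁)]] invertible, then this equals T diag(Γ⁻(τ), Γ⁺(τ)) T⁻¹. -/
import Mathlib


theorem stmt16 (N : ℕ) (T₁ T₂ T₃ T₄ : Matrix (Fin N) (Fin N) ℝ)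
    (lam : Fin N → ℝ) (τ τ₁ : ℝ)
    (Γm Γp : ℝ → Matrix (Fin N) (Fin N) ℝ)
    (hΓm : Γm = fun t => Matrix.diagonal (fun i => Real.exp (-lam i * t)))
    (hΓp : Γp = fun t => Matrix.diagonal (fun i => Real.exp (lam i * t)))
    (T : Matrix (Fin N ⊕ Fin N) (Fin N ⊕ Fin N) ℝ)
    (hT : T = Matrix.fromBlocks T₁ T₂ T₃ T₄) (hTunit : IsUnit T)
    (A : Matrix (Fin N ⊕ Fin N) (Fin N ⊕ Fin N) ℝ)
    (hA : A = T * Matrix.fromBlocks (Matrix.diagonal (fun i => -lam i)) 0 0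
        (Matrix.diagonal lam) * T⁻¹)
    (hScaled : IsUnit (Matrix.fromBlocks T₁ (T₂ * Γm τ₁) T₃ (T₄ * Γm τ₁))) :
    Matrix.fromBlocks (T₁ * Γm τ) (T₂ * Γm (τ₁ - τ)) (T₃ * Γm τ) (T₄ * Γm (τ₁ - τ)) *
        (Matrix.fromBlocks T₁ (T₂ * Γm τ₁) T₃ (T₄ * Γm τ₁))⁻¹ =
      T * Matrix.fromBlocks (Γm τ) 0 0 (Γp τ) * T⁻¹ := by
  subst hΓm hΓp hT
  set E' : Matrix (Fin N ⊕ Fin N) (Fin N ⊕ Fin N) ℝ :=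
    Matrix.fromBlocks 1 0 0 (Matrix.diagonal fun i => Real.exp (lam i * τ₁)) with hE'
  have hEinv : (Matrix.fromBlocks (1 : Matrix (Fin N) (Fin N) ℝ) 0 0
      (Matrix.diagonal fun i => Real.exp (-lam i * τ₁)))⁻¹ = E' := by
    apply Matrix.inv_eq_right_inv
    rw [hE', Matrix.fromBlocks_multiply]
    simp [Matrix.diagonal_mul_diagonal, ← Real.exp_add, ← Matrix.fromBlocks_one]
  have key : ∀ (P Q : Matrix (Fin N) (Fin N) ℝ),
      Matrix.fromBlocks (T₁ * P) (T₂ * Q) (T₃ * P) (T₄ * Q)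
        = Matrix.fromBlocks T₁ T₂ T₃ T₄ * Matrix.fromBlocks P 0 0 Q := by
    intro P Q
    rw [Matrix.fromBlocks_multiply]
    simp
  have key1 : Matrix.fromBlocks T₁ (T₂ * Matrix.diagonal (fun i => Real.exp (-lam i * τ₁)))
      T₃ (T₄ * Matrix.diagonal (fun i => Real.exp (-lam i * τ₁)))
        = Matrix.fromBlocks T₁ T₂ T₃ T₄ *
          Matrix.fromBlocks 1 0 0 (Matrix.diagonal fun i => Real.exp (-lam i * τ₁)) := by
    rw [← key]; simp
  have hDE : Matrix.fromBlocks (Matrix.diagonal fun i => Real.exp (-lam i * τ))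
      (0 : Matrix (Fin N) (Fin N) ℝ) 0
      (Matrix.diagonal fun i => Real.exp (-lam i * (τ₁ - τ))) * E'
        = Matrix.fromBlocks (Matrix.diagonal fun i => Real.exp (-lam i * τ)) 0 0
          (Matrix.diagonal fun i => Real.exp (lam i * τ)) := by
    rw [hE', Matrix.fromBlocks_multiply]
    have hfun : (fun i => Real.exp (-lam i * (τ₁ - τ)) * Real.exp (lam i * τ₁))
        = fun i => Real.exp (lam i * τ) := by
      funext i
      rw [← Real.exp_add]
      ring_nf
    simp only [Matrix.mul_one, Matrix.mul_zero, Matrix.zero_mul, Matrix.diagonal_mul_diagonal,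
      add_zero, zero_add, hfun]
  beta_reduce
  rw [key, key1, Matrix.mul_inv_rev, hEinv]
  simp only [← mul_assoc]
  rw [mul_assoc _ _ E', hDE]
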